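/- There exists a countable, bounded metric space that has infinite Assouad dimension but is not starry. -/
import Mathlib


open Metric Set

/-- A metric space contains an `(A,η)`-approximate `n`-star. -/
def HasApproxStar (X : Type*) [PseudoMetricSpace X] (A η : ℝ) (n : ℕ) : Prop :=
  ∃ ρ : ℝ, 0 < ρ ∧ ∃ x : Fin (n + 1) → X,
    (∀ i j : Fin (n + 1), i ≠ 0 → j ≠ 0 → i ≠ j →
      (A - η) * ρ ≤ dist (x i) (x j) ∧ dist (x i) (x j) ≤ A * ρ) ∧
    (∀ i : Fin (n + 1), i ≠ 0 → ρ ≤ dist (x 0) (x i) ∧ dist (x 0) (x i) ≤ (1 + η) * ρ)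

/-- A metric space is starry if there are uniform `A > 1` and `0 < η < (A-1)/2` such that for
every `n` the space contains an `(Aₙ,η)`-approximate `n`-star for some `Aₙ ≥ A`. -/
def Starry (X : Type*) [PseudoMetricSpace X] : Prop :=
  ∃ A η : ℝ, 1 < A ∧ 0 < η ∧ η < (A - 1) / 2 ∧
    ∀ n : ℕ, ∃ An : ℝ, A ≤ An ∧ HasApproxStar X An η n

/-- `Ψ` is an increasing function `(0,∞) → (0,∞)`. -/
def IncreasingOnPos (Ψ : ℝ → ℝ) : Prop :=
  (∀ t : ℝ, 0 < t → 0 < Ψ t) ∧ StrictMonoOn Ψ (Set.Ioi 0)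

/-- A map `φ` is `Ψ`-quasisymmetric. -/
def IsQuasisymmetric {X Y : Type*} [PseudoMetricSpace X] [PseudoMetricSpace Y]
    (φ : X → Y) (Ψ : ℝ → ℝ) : Prop :=
  ∀ x y z : X, x ≠ y → x ≠ z → y ≠ z →
    dist (φ x) (φ y) / dist (φ x) (φ z) ≤ Ψ (dist x y / dist x z)

/-- A metric space is doubling: there is `K > 0` such that every closed ball `B(x,r)` can be
covered by at most `K` closed balls of radius `r/2`. -/
def DoublingSpace (X : Type*) [PseudoMetricSpace X] : Prop :=
  ∃ K : ℕ, 0 < K ∧ ∀ (x : X) (r : ℝ), 0 < r →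
    ∃ s : Finset X, s.card ≤ K ∧ closedBall x r ⊆ ⋃ y ∈ s, closedBall y (r / 2)

/-- A metric space has finite Assouad dimension: there are `α ≥ 0` and `C > 0` such that every
closed ball `B(x,R)`, `0 < r < R < 1`, can be covered by at most `C·(R/r)^α` sets of diameter
at most `r`. -/
def FiniteAssouad (X : Type*) [PseudoMetricSpace X] : Prop :=
  ∃ α : ℝ, 0 ≤ α ∧ ∃ C : ℝ, 0 < C ∧ ∀ (x : X) (R r : ℝ), 0 < r → r < R → R < 1 →
    ∃ 𝒰 : Finset (Set X),
      (∀ U ∈ 𝒰, EMetric.diam U ≤ ENNReal.ofReal r) ∧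
      closedBall x R ⊆ ⋃ U ∈ 𝒰, U ∧
      (𝒰.card : ℝ) ≤ C * (R / r) ^ α

/-- The discrete metric of value `1/2` on `ℕ`: an infinite equilateral set. -/
noncomputable def myMet : MetricSpace ℕ where
  dist x y := if x = y then 0 else 1/2
  dist_self x := by simp
  dist_comm x y := by simp [eq_comm]
  dist_triangle x y z := by
    split_ifs <;> simp_all
  eq_of_dist_eq_zero := by
    intro x y h
    by_contra hxy
    simp [hxy] at h

lemma myMet_dist (a b : ℕ) : @dist ℕ myMet.toDist a b = if a = b then 0 else 1/2 := rfl

/-- There exists a countable, bounded metric space with infinite Assouad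
dimension which is not starry. -/
theorem exists_countable_bounded_infinite_assouad_not_starry :
    ∃ (X : Type) (_ : MetricSpace X), Countable X ∧
      Bornology.IsBounded (Set.univ : Set X) ∧ ¬ FiniteAssouad X ∧ ¬ Starry X := by
  letI := myMet
  refine ⟨ℕ, myMet, inferInstance, ?_, ?_, ?_⟩
  · -- bounded
    rw [Metric.isBounded_iff]
    refine ⟨1/2, fun a _ b _ => ?_⟩
    rw [myMet_dist]
    split <;> norm_num
  · -- not finite Assouad
    rintro ⟨α, hα, C, hC, h⟩
    obtain ⟨𝒰, hdiam, hcover, -⟩ :=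
      h 0 (1/2) (1/4) (by norm_num) (by norm_num) (by norm_num)
    have hsub : ∀ U ∈ 𝒰, (U : Set ℕ).Subsingleton := by
      intro U hU a ha b hb
      by_contra hab
      have h1 : edist a b ≤ EMetric.diam U := EMetric.edist_le_diam_of_mem ha hb
      have h2 : edist a b = ENNReal.ofReal (1/2) := by
        rw [edist_dist, myMet_dist, if_neg hab]
      have h3 : ENNReal.ofReal (1/2 : ℝ) ≤ ENNReal.ofReal (1/4 : ℝ) :=
        le_trans (h2 ▸ h1) (hdiam U hU)
      rw [ENNReal.ofReal_le_ofReal_iff (by norm_num)] at h3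
      norm_num at h3
    have hball : closedBall (0 : ℕ) (1/2) = Set.univ := by
      ext a
      simp only [Metric.mem_closedBall, Set.mem_univ, iff_true, myMet_dist]
      split <;> norm_num
    have hfin : (Set.univ : Set ℕ).Finite := by
      rw [← hball]
      exact Set.Finite.subset
        (Set.Finite.biUnion 𝒰.finite_toSet (fun U hU => (hsub U hU).finite)) hcover
    exact Set.infinite_univ hfin
  · -- not starry
    rintro ⟨A, η, hA, hη, hη2, h⟩
    obtain ⟨An, hAn, ρ, hρ, x, h1, h2⟩ := h 2
    have hd12 := h1 1 2 (by decide) (by decide) (by decide)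
    have hd01 := h2 1 (by decide)
    have key : ∀ a b : ℕ, @dist ℕ myMet.toDist a b = 0 ∨ @dist ℕ myMet.toDist a b = 1/2 := by
      intro a b
      rw [myMet_dist]
      split <;> simp
    have hAη : (1 : ℝ) < An - η := by linarith
    rcases key (x 1) (x 2) with e | e
    · have := hd12.1
      rw [e] at this
      nlinarith
    rcases key (x 0) (x 1) with e0 | e0
    · have := hd01.1
      rw [e0] at this
      linarith
    have h3 : (An - η) * ρ ≤ (1 + η) * ρ := by
      have a1 := hd12.1
      have a2 := hd01.2
      rw [e] at a1; rw [e0] at a2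
      linarith
    have h4 : An - η ≤ 1 + η := le_of_mul_le_mul_right (by linarith [h3]) hρ
    linarith
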